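/- Let Q : ℝ³ → 𝒮₀ be twice continuously differentiable and let V : ℝ³ → 𝒮₀ be twice continuously differentiable with compact support. Then the function x ↦ (ℐ₂ − ℐ₃)(Q + V)(x) − (ℐ₂ − ℐ₃)(Q)(x) has compact support and ∫_{ℝ³} [ (ℐ₂ − ℐ₃)(Q + V) − (ℐ₂ − ℐ₃)(Q) ] dx = 0; that is, the null Lagrangian ℐ₂ − ℐ₃ is unchanged by compactly supported perturbations. -/

import Mathlib

open Real Matrix MeasureTheory

noncomputable section

/-- Partial derivative in direction `k` of a scalar function on `ℝ³`. -/
def pd3 (k : Fin 3) (f : (Fin 3 → ℝ) → ℝ) (x : Fin 3 → ℝ) : ℝ :=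
  fderiv ℝ f x (Pi.single k 1)

/-- The null-Lagrangian density `ℐ₂ − ℐ₃ = Σ Q_{ik,j}Q_{ij,k} − Σ Q_{ij,j}Q_{ik,k}`. -/
def I23 (Q : (Fin 3 → ℝ) → Matrix (Fin 3) (Fin 3) ℝ) (x : Fin 3 → ℝ) : ℝ :=
  (∑ i : Fin 3, ∑ j : Fin 3, ∑ k : Fin 3,
      pd3 j (fun z => Q z i k) x * pd3 k (fun z => Q z i j) x)
  - (∑ i : Fin 3, ∑ j : Fin 3, ∑ k : Fin 3,
      pd3 j (fun z => Q z i j) x * pd3 k (fun z => Q z i k) x)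

end

/-!
`ℐ₂ − ℐ₃` is a divergence. Each minor `∂ⱼf ∂ₖg − ∂ⱼg ∂ₖf` of a gradient equals
`∂ⱼ(f ∂ₖg) − ∂ₖ(f ∂ⱼg)`, the mixed second derivatives of `g` cancelling, so
`ℐ₂ − ℐ₃ = ∂ₘΦₘ` with `Φₘ = Σᵢₖ (Qᵢₖ Qᵢₘ,ₖ − Qᵢₘ Qᵢₖ,ₖ)`. The flux `Φ` is local, so
`Φ(Q + V) − Φ(Q)` is a `C¹` field vanishing off the support of `V`, and the divergence of a
compactly supported `C¹` field has compact support and integral zero (integrate each `∂ₘ` by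
parts against `1`).
-/

open Filter Topology

section Calculus

variable {E F : Type*} [NormedAddCommGroup E] [NormedSpace ℝ E]
  [NormedAddCommGroup F] [NormedSpace ℝ F]

theorem ContDiff.fderiv_fderiv_apply_comm {f : E → F} (hf : ContDiff ℝ 2 f) (x v w : E) :
    fderiv ℝ (fun z => fderiv ℝ f z w) x v = fderiv ℝ (fun z => fderiv ℝ f z v) x w := by
  have hd : DifferentiableAt ℝ (fderiv ℝ f) x :=
    (hf.fderiv_right (m := 1) le_rfl).differentiable one_ne_zero x
  have hsnd (u u' : E) :
      fderiv ℝ (fun z => fderiv ℝ f z u') x u = fderiv ℝ (fderiv ℝ f) x u u' := by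
    simp [fderiv_clm_apply hd (differentiableAt_const u')]
  rw [hsnd, hsnd]
  exact hf.contDiffAt.isSymmSndFDerivAt (by simp [minSmoothness_of_isRCLikeNormedField]) v w

variable [MeasurableSpace E] [BorelSpace E] {μ : Measure E}

theorem HasCompactSupport.integrable_fderiv_apply [IsFiniteMeasureOnCompacts μ] {g : E → F}
    (hs : HasCompactSupport g) (hg : ContDiff ℝ 1 g) (v : E) :
    Integrable (fun x => fderiv ℝ g x v) μ :=
  ((hg.continuous_fderiv one_ne_zero).clm_apply continuous_const).integrable_of_hasCompactSupport
    (hs.fderiv_apply ℝ v)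

theorem HasCompactSupport.integral_fderiv_apply_eq_zero [FiniteDimensional ℝ E]
    [μ.IsAddHaarMeasure] {g : E → ℝ} (hs : HasCompactSupport g)
    (hg : ContDiff ℝ 1 g) (v : E) : ∫ x, fderiv ℝ g x v ∂μ = 0 := by
  simpa using integral_mul_fderiv_eq_neg_fderiv_mul_of_integrable (μ := μ) (v := v)
    (f := fun _ => (1 : ℝ)) (by simp) (by simpa using hs.integrable_fderiv_apply hg v)
    (by simpa using hg.continuous.integrable_of_hasCompactSupport hs)
    (fun x _ => differentiableAt_const 1) (fun x _ => hg.differentiable one_ne_zero x)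

end Calculus

section PartialDerivatives

variable {f g : (Fin 3 → ℝ) → ℝ} {x : Fin 3 → ℝ}

theorem ContDiff.pd3 {n : WithTop ℕ∞} (hf : ContDiff ℝ (n + 1) f) (k : Fin 3) :
    ContDiff ℝ n (pd3 k f) :=
  (hf.fderiv_right le_rfl).clm_apply contDiff_const

theorem Filter.EventuallyEq.pd3_eq (h : f =ᶠ[𝓝 x] g) (k : Fin 3) : pd3 k f x = pd3 k g x := by
  rw [pd3, h.fderiv_eq, pd3]

theorem pd3_sub (hf : DifferentiableAt ℝ f x) (hg : DifferentiableAt ℝ g x) (k : Fin 3) :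
    pd3 k (fun z => f z - g z) x = pd3 k f x - pd3 k g x := by
  simp [pd3, fderiv_fun_sub hf hg]

theorem pd3_mul (hf : DifferentiableAt ℝ f x) (hg : DifferentiableAt ℝ g x) (k : Fin 3) :
    pd3 k (fun z => f z * g z) x = pd3 k f x * g x + f x * pd3 k g x := by
  simp only [pd3, fderiv_fun_mul hf hg, _root_.add_apply, _root_.smul_apply,
    smul_eq_mul]
  ring

theorem pd3_sum {ι : Type*} (s : Finset ι) {f : ι → (Fin 3 → ℝ) → ℝ}
    (hf : ∀ i ∈ s, DifferentiableAt ℝ (f i) x) (k : Fin 3) :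
    pd3 k (fun z => ∑ i ∈ s, f i z) x = ∑ i ∈ s, pd3 k (f i) x := by
  simp [pd3, fderiv_fun_sum hf]

theorem pd3_comm (hf : ContDiff ℝ 2 f) (j k : Fin 3) :
    pd3 j (pd3 k f) x = pd3 k (pd3 j f) x :=
  hf.fderiv_fderiv_apply_comm x _ _

theorem pd3_mul_pd3_sub_pd3_mul_pd3 (hf : DifferentiableAt ℝ f x) (hg : ContDiff ℝ 2 g)
    (j k : Fin 3) :
    pd3 j f x * pd3 k g x - pd3 j g x * pd3 k f x
      = pd3 j (fun z => f z * pd3 k g z) x - pd3 k (fun z => f z * pd3 j g z) x := by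
  have hdg (m : Fin 3) : DifferentiableAt ℝ (pd3 m g) x :=
    (hg.pd3 m).differentiable one_ne_zero x
  rw [pd3_mul hf (hdg k), pd3_mul hf (hdg j), pd3_comm hg j k]
  ring

end PartialDerivatives

noncomputable def divergence3 (F : Fin 3 → (Fin 3 → ℝ) → ℝ) (x : Fin 3 → ℝ) : ℝ :=
  ∑ m, pd3 m (F m) x

section Divergence

variable {F G : Fin 3 → (Fin 3 → ℝ) → ℝ}

theorem divergence3_sub {x : Fin 3 → ℝ} (hF : ∀ m, DifferentiableAt ℝ (F m) x)
    (hG : ∀ m, DifferentiableAt ℝ (G m) x) :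
    divergence3 (fun m z => F m z - G m z) x = divergence3 F x - divergence3 G x := by
  simp only [divergence3, pd3_sub (hF _) (hG _), Finset.sum_sub_distrib]

theorem HasCompactSupport.divergence3 (hF : ∀ m, HasCompactSupport (F m)) :
    HasCompactSupport (divergence3 F) := by
  have hsum : _root_.divergence3 F = ∑ m, pd3 m (F m) := by
    ext x
    simp [_root_.divergence3]
  rw [hsum]
  exact Finset.sum_induction _ HasCompactSupport (fun _ _ => .add) .zero
    fun m _ => (hF m).fderiv_apply ℝ _

theorem integral_divergence3_eq_zero (hF : ∀ m, ContDiff ℝ 1 (F m))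
    (hs : ∀ m, HasCompactSupport (F m)) : ∫ x, divergence3 F x = 0 := by
  unfold divergence3
  rw [integral_finsetSum (f := fun m => pd3 m (F m)) _
    fun m _ => (hs m).integrable_fderiv_apply (hF m) _]
  exact Finset.sum_eq_zero fun m _ => (hs m).integral_fderiv_apply_eq_zero (hF m) _

end Divergence

noncomputable def nullLagrangianFlux (A : (Fin 3 → ℝ) → Matrix (Fin 3) (Fin 3) ℝ)
    (m : Fin 3) : (Fin 3 → ℝ) → ℝ :=
  fun z => ∑ i, ∑ k,
    (A z i k * pd3 k (fun w => A w i m) z - A z i m * pd3 k (fun w => A w i k) z)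

section NullLagrangianFlux

variable {A B : (Fin 3 → ℝ) → Matrix (Fin 3) (Fin 3) ℝ}

theorem contDiff_nullLagrangianFlux (hA : ∀ i j, ContDiff ℝ 2 fun x => A x i j) (m : Fin 3) :
    ContDiff ℝ 1 (nullLagrangianFlux A m) :=
  ContDiff.sum fun i _ => ContDiff.sum fun k _ =>
    (((hA i k).of_le one_le_two).mul ((hA i m).pd3 k)).sub
      (((hA i m).of_le one_le_two).mul ((hA i k).pd3 k))

theorem Filter.EventuallyEq.nullLagrangianFlux_eq {x : Fin 3 → ℝ} (h : A =ᶠ[𝓝 x] B)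
    (m : Fin 3) : nullLagrangianFlux A m x = nullLagrangianFlux B m x := by
  have hentry (i j : Fin 3) : (fun z => A z i j) =ᶠ[𝓝 x] fun z => B z i j :=
    h.mono fun z hz => by simp [hz]
  simp only [_root_.nullLagrangianFlux, h.eq_of_nhds, (hentry _ _).pd3_eq]

theorem I23_eq_divergence3_nullLagrangianFlux (hA : ∀ i j, ContDiff ℝ 2 fun x => A x i j)
    (x : Fin 3 → ℝ) : I23 A x = divergence3 (nullLagrangianFlux A) x := by
  have ha (i j : Fin 3) : Differentiable ℝ fun z => A z i j :=
    (hA i j).differentiable two_ne_zero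
  have hda (i j k : Fin 3) : Differentiable ℝ (pd3 k fun z => A z i j) :=
    ((hA i j).pd3 k).differentiable one_ne_zero
  have hminors : I23 A x = ∑ i, ∑ j, ∑ k,
      (pd3 j (fun z => A z i k * pd3 k (fun w => A w i j) z) x
        - pd3 k (fun z => A z i k * pd3 j (fun w => A w i j) z) x) := by
    simp only [I23, ← Finset.sum_sub_distrib,
      pd3_mul_pd3_sub_pd3_mul_pd3 (ha _ _ x) (hA _ _)]
  unfold divergence3 _root_.nullLagrangianFlux
  simp (disch := fun_prop) only [pd3_sum, pd3_sub]
  rw [hminors]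
  simp only [Finset.sum_sub_distrib]
  congr 1
  · exact Finset.sum_comm
  · exact (Finset.sum_congr rfl fun i _ => Finset.sum_comm).trans Finset.sum_comm

end NullLagrangianFlux

theorem null_lagrangian_compact_perturbation
    (Q V : (Fin 3 → ℝ) → Matrix (Fin 3) (Fin 3) ℝ)
    (hQreg : ∀ i j : Fin 3, ContDiff ℝ 2 (fun x => Q x i j))
    (hVreg : ∀ i j : Fin 3, ContDiff ℝ 2 (fun x => V x i j))
    (hVsupp : HasCompactSupport V) :
    HasCompactSupport (fun x => I23 (fun y => Q y + V y) x - I23 Q x) ∧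
    ∫ x : Fin 3 → ℝ, (I23 (fun y => Q y + V y) x - I23 Q x) = 0 := by
  have hPreg (i j : Fin 3) : ContDiff ℝ 2 fun x => (Q x + V x) i j :=
    (hQreg i j).add (hVreg i j)
  have hPflux := contDiff_nullLagrangianFlux hPreg
  have hQflux := contDiff_nullLagrangianFlux hQreg
  set F : Fin 3 → (Fin 3 → ℝ) → ℝ :=
    fun m z => nullLagrangianFlux (fun y => Q y + V y) m z - nullLagrangianFlux Q m z
  have hF (m : Fin 3) : ContDiff ℝ 1 (F m) := (hPflux m).sub (hQflux m)
  have hFsupp (m : Fin 3) : HasCompactSupport (F m) := by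
    refine HasCompactSupport.intro hVsupp fun x hx => ?_
    have hQV : (fun y => Q y + V y) =ᶠ[𝓝 x] Q := by
      filter_upwards [notMem_tsupport_iff_eventuallyEq.mp hx] with y hy
      simp [hy]
    simp [F, hQV.nullLagrangianFlux_eq m]
  have hdiv : (fun x => I23 (fun y => Q y + V y) x - I23 Q x) = divergence3 F := by
    ext x
    rw [I23_eq_divergence3_nullLagrangianFlux hPreg, I23_eq_divergence3_nullLagrangianFlux hQreg,
      divergence3_sub (fun m => (hPflux m).differentiable one_ne_zero x)
        (fun m => (hQflux m).differentiable one_ne_zero x)]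
  rw [hdiv]
  exact ⟨.divergence3 hFsupp, integral_divergence3_eq_zero hF hFsupp⟩
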